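/- arXiv:1409.0138 — 2 statements merged into one kernel-verified Lean document; each statement's English description precedes it below -/
import Mathlib

section
/- Let a > 0 and let k : [0, ∞) → ℝ be continuous with k(s) ≤ −a² for all s, and let F be the solution of F'' + kF = 0 with F(0) = 0, F'(0) = 1. Then F(t) ≥ F(r)·e^{a(t−r)} for all 0 < r ≤ t, and consequently for every r > 0 the integral ∫ᵣ^∞ dt/F(t) is finite. -/
/-!
The quantity `F F'` has derivative `F'² - k F² ≥ 0` whatever the sign of `F`, so `F F' ≥ 0`.
Hence the energy `F'² - a² F²`, whose derivative is `2 F F' (-k - a²)`, never drops below its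
initial value `1`. By continuity `F' ≥ 1`, and then `F' > |a F|`, so `F e^{-a t}` is
nondecreasing, which is the growth bound; together with `F t ≥ t > 0` it makes `1 / F`
dominated by a multiple of `e^{-a t}`.
-/

open Set Real Filter Topology MeasureTheory

theorem monotoneOn_Ici_of_hasDerivWithinAt_nonneg {f f' : ℝ → ℝ} {x₀ : ℝ}
    (hf : ∀ x ∈ Ici x₀, HasDerivWithinAt f (f' x) (Ici x₀) x) (hf' : ∀ x ∈ Ioi x₀, 0 ≤ f' x) :
    MonotoneOn f (Ici x₀) := by
  refine monotoneOn_of_hasDerivWithinAt_nonneg (f' := f') (convex_Ici x₀)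
    (fun x hx => (hf x hx).continuousWithinAt) (fun x hx => ?_) (fun x hx => ?_)
  · rw [interior_Ici] at hx ⊢
    exact (hf x (mem_Ici_of_Ioi hx)).mono Ioi_subset_Ici_self
  · exact hf' x (by rwa [interior_Ici] at hx)

theorem one_le_of_one_le_sq {g : ℝ → ℝ} {x₀ : ℝ} (hg : ContinuousOn g (Ici x₀))
    (hsq : ∀ x ∈ Ici x₀, 1 ≤ g x ^ 2) (h₀ : 0 < g x₀) : ∀ x ∈ Ici x₀, 1 ≤ g x := by
  intro x hx
  by_contra! hlt
  have hneg : g x < 0 := by nlinarith [hsq x hx]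
  obtain ⟨y, hy, hy0⟩ := intermediate_value_Icc' (mem_Ici.1 hx) (hg.mono Icc_subset_Ici_self)
    ⟨hneg.le, h₀.le⟩
  have := hsq y hy.1
  rw [hy0] at this
  norm_num at this

theorem mul_exp_le_of_mul_le_deriv {f f' : ℝ → ℝ} {a x₀ : ℝ}
    (hf : ∀ x ∈ Ici x₀, HasDerivWithinAt f (f' x) (Ici x₀) x)
    (h : ∀ x ∈ Ioi x₀, a * f x ≤ f' x) {r t : ℝ} (hr : x₀ ≤ r) (hrt : r ≤ t) :
    f r * exp (a * (t - r)) ≤ f t := by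
  have hmono : MonotoneOn (fun x => f x * exp (-(a * x))) (Ici x₀) := by
    refine monotoneOn_Ici_of_hasDerivWithinAt_nonneg
      (f' := fun x => exp (-(a * x)) * (f' x - a * f x)) (fun x hx => ?_) (fun x hx => ?_)
    · have hexp : HasDerivAt (fun x => exp (-(a * x))) (exp (-(a * x)) * -a) x := by
        simpa using ((hasDerivAt_id x).const_mul a).neg.exp
      exact ((hf x hx).mul hexp.hasDerivWithinAt).congr_deriv (by ring)
    · exact mul_nonneg (exp_pos _).le (sub_nonneg.2 (h x hx))
  have key := mul_le_mul_of_nonneg_right (hmono hr (hr.trans hrt) hrt) (exp_pos (a * t)).le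
  calc f r * exp (a * (t - r)) = f r * exp (-(a * r)) * exp (a * t) := by
        rw [mul_assoc, ← exp_add]; ring_nf
    _ ≤ f t * exp (-(a * t)) * exp (a * t) := key
    _ = f t := by rw [mul_assoc, ← exp_add, neg_add_cancel, exp_zero, mul_one]

theorem integrableOn_Ici_one_div_of_mul_exp_le {f : ℝ → ℝ} {a r : ℝ} (ha : 0 < a)
    (hf : ContinuousOn f (Ici r)) (hr : 0 < f r)
    (h : ∀ t ∈ Ici r, f r * exp (a * (t - r)) ≤ f t) :
    IntegrableOn (fun t => 1 / f t) (Ici r) := by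
  have hpos : ∀ t ∈ Ici r, 0 < f t := fun t ht => (mul_pos hr (exp_pos _)).trans_le (h t ht)
  have hdom : IntegrableOn (fun t => exp (a * r) / f r * exp (-a * t)) (Ici r) := by
    rw [integrableOn_Ici_iff_integrableOn_Ioi]
    exact (exp_neg_integrableOn_Ioi r ha).const_mul _
  refine hdom.mono' ((continuousOn_const.div hf fun t ht => (hpos t ht).ne').aestronglyMeasurable
    measurableSet_Ici) ((ae_restrict_iff' measurableSet_Ici).2 (Eventually.of_forall ?_))
  intro t ht
  rw [norm_of_nonneg (one_div_pos.2 (hpos t ht)).le]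
  calc 1 / f t ≤ 1 / (f r * exp (a * (t - r))) :=
        one_div_le_one_div_of_le (mul_pos hr (exp_pos _)) (h t ht)
    _ = exp (a * r) / f r * exp (-a * t) := by
        rw [div_mul_eq_mul_div, ← exp_add, one_div, mul_inv, ← exp_neg]
        field_simp
        ring_nf

structure IsJacobiSolution (k F F' F'' : ℝ → ℝ) : Prop where
  hasDerivWithinAt : ∀ s ∈ Ici (0 : ℝ), HasDerivWithinAt F (F' s) (Ici 0) s
  hasDerivWithinAt_deriv : ∀ s ∈ Ici (0 : ℝ), HasDerivWithinAt F' (F'' s) (Ici 0) s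
  ode : ∀ s ∈ Ici (0 : ℝ), F'' s + k s * F s = 0
  apply_zero : F 0 = 0
  deriv_zero : F' 0 = 1

namespace IsJacobiSolution

variable {a : ℝ} {k F F' F'' : ℝ → ℝ}

theorem secondDeriv_eq (hF : IsJacobiSolution k F F' F'') {s : ℝ} (hs : s ∈ Ici (0 : ℝ)) :
    F'' s = -(k s * F s) :=
  eq_neg_of_add_eq_zero_left (hF.ode s hs)

theorem mul_deriv_nonneg (hF : IsJacobiSolution k F F' F'') (hk : ∀ s ∈ Ici (0 : ℝ), k s ≤ 0) :
    ∀ s ∈ Ici (0 : ℝ), 0 ≤ F s * F' s := by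
  have hmono : MonotoneOn (fun s => F s * F' s) (Ici 0) := by
    refine monotoneOn_Ici_of_hasDerivWithinAt_nonneg
      (fun s hs => (hF.hasDerivWithinAt s hs).mul (hF.hasDerivWithinAt_deriv s hs)) fun s hs => ?_
    have hs' := Ioi_subset_Ici_self hs
    rw [hF.secondDeriv_eq hs']
    nlinarith [hk s hs', sq_nonneg (F s), sq_nonneg (F' s)]
  intro s hs
  simpa [hF.apply_zero] using hmono self_mem_Ici hs hs

theorem one_add_sq_mul_sq_le_deriv_sq (hF : IsJacobiSolution k F F' F'')
    (hk : ∀ s ∈ Ici (0 : ℝ), k s ≤ -a ^ 2) :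
    ∀ s ∈ Ici (0 : ℝ), 1 + a ^ 2 * F s ^ 2 ≤ F' s ^ 2 := by
  have hFF' := hF.mul_deriv_nonneg fun s hs => (hk s hs).trans (neg_nonpos.2 (sq_nonneg a))
  have hmono : MonotoneOn (fun s => F' s ^ 2 - a ^ 2 * F s ^ 2) (Ici 0) := by
    refine monotoneOn_Ici_of_hasDerivWithinAt_nonneg
      (f' := fun s => 2 * (F s * F' s) * (-k s - a ^ 2)) (fun s hs => ?_) fun s hs => ?_
    · refine (((hF.hasDerivWithinAt_deriv s hs).pow 2).sub
        (((hF.hasDerivWithinAt s hs).pow 2).const_mul (a ^ 2))).congr_deriv ?_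
      rw [hF.secondDeriv_eq hs]
      push_cast
      ring
    · have hs' := Ioi_subset_Ici_self hs
      exact mul_nonneg (mul_nonneg zero_le_two (hFF' s hs')) (by linarith [hk s hs'])
  intro s hs
  have := hmono self_mem_Ici hs hs
  simp only [hF.apply_zero, hF.deriv_zero] at this
  linarith

theorem one_le_deriv (hF : IsJacobiSolution k F F' F'') (hk : ∀ s ∈ Ici (0 : ℝ), k s ≤ 0) :
    ∀ s ∈ Ici (0 : ℝ), 1 ≤ F' s := by
  have henergy := hF.one_add_sq_mul_sq_le_deriv_sq (a := 0) (by simpa using hk)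
  refine one_le_of_one_le_sq (fun s hs => (hF.hasDerivWithinAt_deriv s hs).continuousWithinAt)
    (fun s hs => by simpa using henergy s hs) ?_
  rw [hF.deriv_zero]
  exact one_pos

theorem le_apply (hF : IsJacobiSolution k F F' F'') (hk : ∀ s ∈ Ici (0 : ℝ), k s ≤ 0) :
    ∀ s ∈ Ici (0 : ℝ), s ≤ F s := by
  have hmono : MonotoneOn (fun s => F s - s) (Ici 0) :=
    monotoneOn_Ici_of_hasDerivWithinAt_nonneg
      (fun s hs => (hF.hasDerivWithinAt s hs).sub (hasDerivWithinAt_id s _))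
      fun s hs => sub_nonneg.2 (hF.one_le_deriv hk s (Ioi_subset_Ici_self hs))
  intro s hs
  simpa [hF.apply_zero] using hmono self_mem_Ici hs hs

theorem mul_le_deriv (hF : IsJacobiSolution k F F' F'') (hk : ∀ s ∈ Ici (0 : ℝ), k s ≤ -a ^ 2) :
    ∀ s ∈ Ici (0 : ℝ), a * F s ≤ F' s := by
  intro s hs
  have hF'_pos := hF.one_le_deriv (fun s hs => (hk s hs).trans (neg_nonpos.2 (sq_nonneg a))) s hs
  have hsq : (a * F s) ^ 2 ≤ F' s ^ 2 := by
    nlinarith [hF.one_add_sq_mul_sq_le_deriv_sq hk s hs]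
  exact (le_abs_self _).trans (abs_le_of_sq_le_sq hsq (by linarith))

theorem mul_exp_le (hF : IsJacobiSolution k F F' F'') (hk : ∀ s ∈ Ici (0 : ℝ), k s ≤ -a ^ 2)
    {r t : ℝ} (hr : 0 ≤ r) (hrt : r ≤ t) : F r * exp (a * (t - r)) ≤ F t :=
  mul_exp_le_of_mul_le_deriv hF.hasDerivWithinAt
    (fun s hs => hF.mul_le_deriv hk s (Ioi_subset_Ici_self hs)) hr hrt

end IsJacobiSolution

theorem stmt_10_general (a : ℝ) (ha : 0 < a) (k F F' F'' : ℝ → ℝ)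
    (hk_le : ∀ s ∈ Set.Ici (0 : ℝ), k s ≤ -a ^ 2)
    (hF' : ∀ s ∈ Set.Ici (0 : ℝ), HasDerivWithinAt F (F' s) (Set.Ici 0) s)
    (hF'' : ∀ s ∈ Set.Ici (0 : ℝ), HasDerivWithinAt F' (F'' s) (Set.Ici 0) s)
    (hODE : ∀ s ∈ Set.Ici (0 : ℝ), F'' s + k s * F s = 0)
    (hF0 : F 0 = 0) (hF'0 : F' 0 = 1) :
    (∀ r t : ℝ, 0 < r → r ≤ t → F r * Real.exp (a * (t - r)) ≤ F t) ∧
      ∀ r : ℝ, 0 < r → IntegrableOn (fun t => 1 / F t) (Set.Ici r) := by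
  have hF : IsJacobiSolution k F F' F'' := ⟨hF', hF'', hODE, hF0, hF'0⟩
  have hk : ∀ s ∈ Ici (0 : ℝ), k s ≤ 0 := fun s hs => (hk_le s hs).trans (neg_nonpos.2 (sq_nonneg a))
  have hgrowth : ∀ r t : ℝ, 0 < r → r ≤ t → F r * exp (a * (t - r)) ≤ F t :=
    fun r t hr hrt => hF.mul_exp_le hk_le hr.le hrt
  refine ⟨hgrowth, fun r hr => integrableOn_Ici_one_div_of_mul_exp_le ha ?_
    (hr.trans_le (hF.le_apply hk r hr.le)) fun t ht => hgrowth r t hr ht⟩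
  exact fun t ht => (hF' t (hr.le.trans ht)).continuousWithinAt.mono (Ici_subset_Ici.2 hr.le)

/-- Exponential growth of `F` and finiteness of `∫ᵣ^∞ dt/F(t)` (used in Lemma 5):
if `k ≤ -a² < 0` and `F'' + kF = 0`, `F(0)=0`, `F'(0)=1`, then `F(t) ≥ F(r)e^{a(t-r)}`
for `0 < r ≤ t`, and `1/F` is integrable on `[r,∞)` for every `r > 0`. -/
theorem stmt_10 (a : ℝ) (ha : 0 < a) (k F F' F'' : ℝ → ℝ)
    (hk_cont : ContinuousOn k (Set.Ici 0))
    (hk_le : ∀ s ∈ Set.Ici (0 : ℝ), k s ≤ -a ^ 2)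
    (hF' : ∀ s ∈ Set.Ici (0 : ℝ), HasDerivWithinAt F (F' s) (Set.Ici 0) s)
    (hF'' : ∀ s ∈ Set.Ici (0 : ℝ), HasDerivWithinAt F' (F'' s) (Set.Ici 0) s)
    (hF''_cont : ContinuousOn F'' (Set.Ici 0))
    (hODE : ∀ s ∈ Set.Ici (0 : ℝ), F'' s + k s * F s = 0)
    (hF0 : F 0 = 0) (hF'0 : F' 0 = 1) :
    (∀ r t : ℝ, 0 < r → r ≤ t → F r * Real.exp (a * (t - r)) ≤ F t) ∧
      ∀ r : ℝ, 0 < r → IntegrableOn (fun t => 1 / F t) (Set.Ici r) :=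
  stmt_10_general a ha k F F' F'' hk_le hF' hF'' hODE hF0 hF'0
end

section
/- Let a > 0 and let k : [0, ∞) → ℝ be continuous with k(s) ≤ −a² for all s, let F be the solution of F'' + kF = 0 with F(0) = 0, F'(0) = 1, and define g(r) = exp(−∫ᵣ^∞ dt/F(t)) for r > 0. Then g is differentiable on (0, ∞) with g'(r) = g(r)/F(r) > 0, and g'(r) converges as r → 0⁺ to the positive limit c = lim_{r→0⁺} g(r)/r; in particular g extends to a C¹ function on [0, ∞) with g(0) = 0 and g'(0) = c > 0. -/
/-!
Where `F ≥ 0` the Jacobi equation gives `F'' ≥ a²F ≥ 0`, so a continuous induction from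
`F(0) = 0`, `F'(0) = 1` yields `F' ≥ 1` and `F(s) ≥ s` on `[0, ∞)`. The energy `F'² - a²F²`
is then nondecreasing, hence `F' ≥ aF` and `F(s)e^{-as}` is nondecreasing: `1/F` decays
exponentially, and `g' = g/F`.

Moreover `g/F = exp ψ` with `ψ(r) = -∫ᵣ^∞ dt/F(t) - log F(r)`, and `ψ' = (1 - F')/F ≤ 0`.
Since `F'(t) - 1 = O(t)` and `F(t) ≥ t`, `ψ'` is bounded below near `0`, so the nonincreasing
`ψ` is bounded and has a finite limit at `0⁺`. Hence `g/F → c > 0`, and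
`g(r)/r = (g/F)(F/r) → c`.
-/

open Set Real Filter Topology MeasureTheory

theorem monotoneOn_of_hasDerivWithinAt_nonneg_of_subset {S D : Set ℝ} {f f' : ℝ → ℝ}
    (hD : Convex ℝ D) (hDS : D ⊆ S) (hf : ∀ x ∈ S, HasDerivWithinAt f (f' x) S x)
    (hf' : ∀ x ∈ interior D, 0 ≤ f' x) : MonotoneOn f D :=
  monotoneOn_of_hasDerivWithinAt_nonneg hD
    (fun x hx => (hf x (hDS hx)).continuousWithinAt.mono hDS)
    (fun x hx => (hf x (hDS (interior_subset hx))).mono (interior_subset.trans hDS)) hf'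

theorem hasDerivWithinAt_Ici_zero_iff_tendsto_div {f : ℝ → ℝ} {c : ℝ} (h₀ : f 0 = 0) :
    HasDerivWithinAt f c (Ici 0) 0 ↔ Tendsto (fun x => f x / x) (𝓝[>] 0) (𝓝 c) := by
  rw [hasDerivWithinAt_iff_tendsto_slope, Ici_sdiff_left]
  refine tendsto_congr fun x => ?_
  simp [slope_def_field, h₀]

theorem hasDerivAt_setIntegral_Ioi {E : Type*} [NormedAddCommGroup E] [NormedSpace ℝ E]
    [CompleteSpace E] {f : ℝ → E} {b x : ℝ} (hf : IntegrableOn f (Ioi b)) (hbx : b < x)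
    (hcont : ContinuousAt f x) : HasDerivAt (fun r => ∫ t in Ioi r, f t) (-f x) x := by
  have hint : IntervalIntegrable f volume b x :=
    (intervalIntegrable_iff_integrableOn_Ioc_of_le hbx.le).2 (hf.mono_set Ioc_subset_Ioi_self)
  have hmeas : StronglyMeasurableAtFilter f (𝓝 x) :=
    AEStronglyMeasurable.stronglyMeasurableAtFilter_of_mem hf.aestronglyMeasurable
      (Ioi_mem_nhds hbx)
  refine ((intervalIntegral.integral_hasDerivAt_right hint hmeas hcont).const_sub
    (∫ t in Ioi b, f t)).congr_of_eventuallyEq ?_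
  filter_upwards [Ioi_mem_nhds hbx] with r hr
  rw [← intervalIntegral.integral_Ioi_sub_Ioi hf hr.le, sub_sub_cancel]

theorem bddAbove_image_Ioi_zero_of_antitoneOn {ψ ψ' : ℝ → ℝ} {C : ℝ}
    (hanti : AntitoneOn ψ (Ioi 0)) (hψ : ∀ r > 0, HasDerivAt ψ (ψ' r) r)
    (hC : ∀ᶠ r in 𝓝[>] 0, -C ≤ ψ' r) :
    BddAbove (ψ '' Ioi 0) := by
  obtain ⟨δ, hδ, hsub⟩ := mem_nhdsGT_iff_exists_Ioc_subset.1 hC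
  have hmono : MonotoneOn (fun r => ψ r + C * r) (Ioc 0 δ) := by
    refine monotoneOn_of_hasDerivWithinAt_nonneg_of_subset (convex_Ioc 0 δ) subset_rfl
      (fun r hr => ((hψ r hr.1).add ((hasDerivAt_id r).const_mul C)).hasDerivWithinAt) ?_
    intro r hr
    have : -C ≤ ψ' r := hsub (interior_subset hr)
    simp only [mul_one]
    linarith
  refine ⟨ψ δ + |C| * δ, ?_⟩
  rintro _ ⟨r, hr, rfl⟩
  rcases le_or_gt r δ with hrδ | hδr
  · have : ψ r + C * r ≤ ψ δ + C * δ := hmono ⟨hr, hrδ⟩ ⟨hδ, le_rfl⟩ hrδ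
    linarith [mul_le_mul_of_nonneg_right (le_abs_self C) (sub_nonneg.2 hrδ),
      mul_nonneg (abs_nonneg C) (mem_Ioi.1 hr).le]
  · linarith [hanti (mem_Ioi.2 hδ) hr hδr.le, mul_nonneg (abs_nonneg C) (mem_Ioi.1 hδ).le]

theorem contDiffOn_one_Ici_zero_of_tendsto_deriv {f f' : ℝ → ℝ} {c : ℝ}
    (h₀ : HasDerivWithinAt f c (Ici 0) 0) (hf : ∀ x > 0, HasDerivAt f (f' x) x)
    (hf' : ContinuousOn f' (Ioi 0)) (hlim : Tendsto f' (𝓝[>] 0) (𝓝 c)) :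
    ContDiffOn ℝ 1 f (Ici 0) := by
  have hD : EqOn (derivWithin f (Ici 0)) f' (Ioi 0) := fun x hx =>
    (hf x hx).hasDerivWithinAt.derivWithin (uniqueDiffOn_Ici 0 x (mem_Ioi.1 hx).le)
  rw [contDiffOn_one_iff_derivWithin (uniqueDiffOn_Ici 0)]
  constructor
  · intro x hx
    rcases (mem_Ici.1 hx).eq_or_lt with rfl | hx
    · exact h₀.differentiableWithinAt
    · exact (hf x hx).differentiableAt.differentiableWithinAt
  · intro x hx
    rcases (mem_Ici.1 hx).eq_or_lt with rfl | hx
    · have : ContinuousWithinAt (derivWithin f (Ici 0)) (Ioi 0) 0 := by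
        rw [ContinuousWithinAt, h₀.derivWithin (uniqueDiffOn_Ici 0 0 self_mem_Ici)]
        exact hlim.congr' (eventually_nhdsWithin_of_forall fun x hx => (hD hx).symm)
      rwa [← continuousWithinAt_insert_self, Ioi_insert] at this
    · exact ((hf'.continuousAt (Ioi_mem_nhds hx)).congr
        (eventually_of_mem (Ioi_mem_nhds hx) fun y hy => (hD hy).symm)).continuousWithinAt

theorem exists_contDiffOn_one_Ici_extension {g g' : ℝ → ℝ} {c : ℝ}
    (hg : ∀ x > 0, HasDerivAt g (g' x) x) (hg' : ContinuousOn g' (Ioi 0))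
    (hlim' : Tendsto g' (𝓝[>] 0) (𝓝 c))
    (hlim : Tendsto (fun x => g x / x) (𝓝[>] 0) (𝓝 c)) :
    ∃ gext : ℝ → ℝ, EqOn gext g (Ioi 0) ∧ gext 0 = 0 ∧ ContDiffOn ℝ 1 gext (Ici 0) ∧
      derivWithin gext (Ici 0) 0 = c := by
  have heq : EqOn ((Ioi 0).indicator g) g (Ioi 0) := fun x hx => indicator_of_mem hx g
  have h₀ : HasDerivWithinAt ((Ioi 0).indicator g) c (Ici 0) 0 := by
    rw [hasDerivWithinAt_Ici_zero_iff_tendsto_div (by simp)]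
    exact hlim.congr' (eventually_nhdsWithin_of_forall fun x hx => by simp only [heq hx])
  have hg_ext : ∀ x > 0, HasDerivAt ((Ioi 0).indicator g) (g' x) x := fun x hx =>
    (hg x hx).congr_of_eventuallyEq (eventually_of_mem (Ioi_mem_nhds hx) heq)
  exact ⟨(Ioi 0).indicator g, heq, by simp,
    contDiffOn_one_Ici_zero_of_tendsto_deriv h₀ hg_ext hg' hlim',
    h₀.derivWithin (uniqueDiffOn_Ici 0 0 self_mem_Ici)⟩

/-- `F'' + kF = 0` with `k ≤ -a²` gives `F'' = -kF ≥ a²F` wherever `F ≥ 0`. -/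
structure JacobiComparison (a : ℝ) (F F' F'' : ℝ → ℝ) : Prop where
  hasDerivWithinAt : ∀ s ∈ Ici (0 : ℝ), HasDerivWithinAt F (F' s) (Ici 0) s
  hasDerivWithinAt_deriv : ∀ s ∈ Ici (0 : ℝ), HasDerivWithinAt F' (F'' s) (Ici 0) s
  sq_mul_le : ∀ s ∈ Ici (0 : ℝ), 0 ≤ F s → a ^ 2 * F s ≤ F'' s
  map_zero : F 0 = 0
  deriv_zero : F' 0 = 1

namespace JacobiComparison

variable {a : ℝ} {F F' F'' : ℝ → ℝ}

theorem continuousOn (hJ : JacobiComparison a F F' F'') : ContinuousOn F (Ici 0) :=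
  fun s hs => (hJ.hasDerivWithinAt s hs).continuousWithinAt

theorem continuousOn_deriv (hJ : JacobiComparison a F F' F'') : ContinuousOn F' (Ici 0) :=
  fun s hs => (hJ.hasDerivWithinAt_deriv s hs).continuousWithinAt

theorem hasDerivAt (hJ : JacobiComparison a F F' F'') {s : ℝ} (hs : 0 < s) :
    HasDerivAt F (F' s) s :=
  (hJ.hasDerivWithinAt s hs.le).hasDerivAt (Ici_mem_nhds hs)

theorem eventually_one_le_deriv_and_self_le (hJ : JacobiComparison a F F' F'') {x : ℝ}
    (hx : 0 ≤ x) (h₁ : 1 ≤ F' x) (h₂ : x ≤ F x) :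
    ∀ᶠ t in 𝓝[>] x, 1 ≤ F' t ∧ t ≤ F t := by
  have hpos : ∀ᶠ t in 𝓝[≥] x, 0 < F' t :=
    nhdsWithin_mono x (Ici_subset_Ici.2 hx)
      ((hJ.continuousOn_deriv x hx).eventually (lt_mem_nhds (by linarith)))
  obtain ⟨y, hxy, hsub⟩ := mem_nhdsGE_iff_exists_Icc_subset.1 hpos
  have hD : Icc x y ⊆ Ici 0 := fun t ht => hx.trans ht.1
  have hx' : x ∈ Icc x y := left_mem_Icc.2 (le_of_lt hxy)
  have hF : MonotoneOn F (Icc x y) :=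
    monotoneOn_of_hasDerivWithinAt_nonneg_of_subset (convex_Icc x y) hD hJ.hasDerivWithinAt
      fun t ht => (hsub (interior_subset ht)).le
  have hF' : MonotoneOn F' (Icc x y) := by
    refine monotoneOn_of_hasDerivWithinAt_nonneg_of_subset (convex_Icc x y) hD
      hJ.hasDerivWithinAt_deriv fun t ht => ?_
    have ht := interior_subset ht
    have hFt : 0 ≤ F t := by linarith [hF hx' ht ht.1]
    nlinarith [hJ.sq_mul_le t (hD ht) hFt]
  have hF_sub : MonotoneOn (fun t => F t - t) (Icc x y) :=
    monotoneOn_of_hasDerivWithinAt_nonneg_of_subset (convex_Icc x y) hD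
      (fun t ht => (hJ.hasDerivWithinAt t ht).sub (hasDerivWithinAt_id t _))
      fun t ht => by linarith [hF' hx' (interior_subset ht) (interior_subset ht).1]
  filter_upwards [Icc_mem_nhdsGT hxy] with t ht
  exact ⟨h₁.trans (hF' hx' ht ht.1), by linarith [hF_sub hx' ht ht.1]⟩

theorem one_le_deriv_and_self_le (hJ : JacobiComparison a F F' F'') {s : ℝ} (hs : 0 ≤ s) :
    1 ≤ F' s ∧ s ≤ F s := by
  set S := {t | 1 ≤ F' t ∧ t ≤ F t}
  have hS : S ∩ Icc 0 s = Icc 0 s ∩ (fun t => (F' t, F t - t)) ⁻¹' (Ici 1 ×ˢ Ici 0) := by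
    ext t
    simp only [mem_inter_iff, mem_preimage, mem_prod, mem_Ici, sub_nonneg]
    exact and_comm
  have hclosed : IsClosed (S ∩ Icc 0 s) := by
    rw [hS]
    exact ((hJ.continuousOn_deriv.prodMk (hJ.continuousOn.sub continuousOn_id)).mono
      Icc_subset_Ici_self).preimage_isClosed_of_isClosed isClosed_Icc
        (isClosed_Ici.prod isClosed_Ici)
  refine hclosed.Icc_subset_of_forall_mem_nhdsWithin ⟨hJ.deriv_zero.ge, hJ.map_zero.ge⟩
    (fun x hx => hJ.eventually_one_le_deriv_and_self_le hx.2.1 hx.1.1 hx.1.2) ⟨hs, le_rfl⟩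

theorem one_le_deriv (hJ : JacobiComparison a F F' F'') {s : ℝ} (hs : 0 ≤ s) : 1 ≤ F' s :=
  (hJ.one_le_deriv_and_self_le hs).1

theorem self_le (hJ : JacobiComparison a F F' F'') {s : ℝ} (hs : 0 ≤ s) : s ≤ F s :=
  (hJ.one_le_deriv_and_self_le hs).2

theorem pos (hJ : JacobiComparison a F F' F'') {s : ℝ} (hs : 0 < s) : 0 < F s :=
  hs.trans_le (hJ.self_le hs.le)

theorem mul_le_deriv (hJ : JacobiComparison a F F' F'') {s : ℝ} (hs : 0 ≤ s) :
    a * F s ≤ F' s := by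
  have hE : MonotoneOn (fun s => F' s ^ 2 - a ^ 2 * F s ^ 2) (Ici 0) := by
    refine monotoneOn_of_hasDerivWithinAt_nonneg_of_subset (convex_Ici 0) subset_rfl
      (fun s hs => ((hJ.hasDerivWithinAt_deriv s hs).pow 2).sub
        (((hJ.hasDerivWithinAt s hs).pow 2).const_mul _)) fun t ht => ?_
    have ht := interior_subset ht
    have hFt := (mem_Ici.1 ht).trans (hJ.self_le ht)
    simp only [Nat.cast_ofNat, Nat.add_one_sub_one, pow_one]
    nlinarith [hJ.sq_mul_le t ht hFt, hJ.one_le_deriv ht]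
  have := hE self_mem_Ici hs hs
  simp only [hJ.map_zero, hJ.deriv_zero] at this
  nlinarith [hJ.one_le_deriv hs]

theorem monotoneOn_mul_exp (hJ : JacobiComparison a F F' F'') :
    MonotoneOn (fun s => F s * exp (-a * s)) (Ici 0) := by
  refine monotoneOn_of_hasDerivWithinAt_nonneg_of_subset (convex_Ici 0) subset_rfl
    (fun s hs => (hJ.hasDerivWithinAt s hs).mul
      ((((hasDerivAt_id s).const_mul (-a)).exp).hasDerivWithinAt)) fun t ht => ?_
  have := hJ.mul_le_deriv (interior_subset ht)
  simp only [id, mul_one]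
  nlinarith [exp_pos (-a * t)]

theorem continuousOn_one_div (hJ : JacobiComparison a F F' F'') :
    ContinuousOn (fun t => 1 / F t) (Ioi 0) :=
  continuousOn_const.div (hJ.continuousOn.mono Ioi_subset_Ici_self) fun _ ht => (hJ.pos ht).ne'

theorem integrableOn_one_div (hJ : JacobiComparison a F F' F'') (ha : 0 < a) {r : ℝ}
    (hr : 0 < r) : IntegrableOn (fun t => 1 / F t) (Ioi r) := by
  set m := F r * exp (-a * r)
  have hm : 0 < m := mul_pos (hJ.pos hr) (exp_pos _)
  refine ((exp_neg_integrableOn_Ioi r ha).const_mul m⁻¹).mono'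
    ((hJ.continuousOn_one_div.mono (Ioi_subset_Ioi hr.le)).aestronglyMeasurable measurableSet_Ioi)
    ((ae_restrict_iff' measurableSet_Ioi).2 (ae_of_all _ fun t ht => ?_))
  have hmt : m ≤ F t * exp (-a * t) := hJ.monotoneOn_mul_exp hr.le (hr.trans ht).le ht.le
  rw [norm_of_nonneg (one_div_nonneg.2 (hJ.pos (hr.trans ht)).le)]
  calc 1 / F t = exp (-a * t) / (F t * exp (-a * t)) := by
        field_simp
    _ ≤ exp (-a * t) / m := div_le_div_of_nonneg_left (exp_pos _).le hm hmt
    _ = m⁻¹ * exp (-a * t) := by ring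

theorem hasDerivAt_tail (hJ : JacobiComparison a F F' F'') (ha : 0 < a) {r : ℝ} (hr : 0 < r) :
    HasDerivAt (fun r => ∫ t in Ioi r, 1 / F t) (-(1 / F r)) r :=
  hasDerivAt_setIntegral_Ioi (hJ.integrableOn_one_div ha (half_pos hr)) (half_lt_self hr)
    (hJ.continuousOn_one_div.continuousAt (Ioi_mem_nhds hr))

theorem hasDerivAt_exp_neg_tail (hJ : JacobiComparison a F F' F'') (ha : 0 < a) {r : ℝ}
    (hr : 0 < r) : HasDerivAt (fun r => exp (-∫ t in Ioi r, 1 / F t))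
      (exp (-∫ t in Ioi r, 1 / F t) / F r) r := by
  simpa [div_eq_mul_inv] using (hJ.hasDerivAt_tail ha hr).neg.exp

theorem eventually_neg_le_one_sub_deriv_div (hJ : JacobiComparison a F F' F'') :
    ∃ C, ∀ᶠ t in 𝓝[>] 0, -C ≤ (1 - F' t) / F t := by
  obtain ⟨C, hC₀, hC⟩ := (HasFDerivWithinAt.isBigO_sub
    (hJ.hasDerivWithinAt_deriv 0 self_mem_Ici)).exists_pos
  have hC' : ∀ᶠ t in 𝓝[>] 0, ‖F' t - F' 0‖ ≤ C * ‖t - 0‖ :=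
    nhdsWithin_mono 0 Ioi_subset_Ici_self hC.bound
  refine ⟨C, ?_⟩
  filter_upwards [hC', self_mem_nhdsWithin] with t hCt ht
  have hFt := hJ.pos ht
  rw [le_div_iff₀ hFt]
  simp only [hJ.deriv_zero, sub_zero, norm_eq_abs, abs_of_pos (mem_Ioi.1 ht)] at hCt
  nlinarith [le_abs_self (F' t - 1),
    mul_le_mul_of_nonneg_left (hJ.self_le (mem_Ioi.1 ht).le) hC₀.le]

theorem exists_tendsto_exp_neg_tail_div (hJ : JacobiComparison a F F' F'') (ha : 0 < a) :
    ∃ c > 0, Tendsto (fun r => exp (-∫ t in Ioi r, 1 / F t) / F r) (𝓝[>] 0) (𝓝 c) := by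
  set ψ := fun r => -(∫ t in Ioi r, 1 / F t) - log (F r)
  have hψ : ∀ r > 0, HasDerivAt ψ ((1 - F' r) / F r) r := fun r hr =>
    ((hJ.hasDerivAt_tail ha hr).neg.sub ((hJ.hasDerivAt hr).log (hJ.pos hr).ne')).congr_deriv
      (by ring)
  have hanti : AntitoneOn ψ (Ioi 0) :=
    antitoneOn_of_hasDerivWithinAt_nonpos (convex_Ioi 0)
      (fun r hr => (hψ r hr).continuousAt.continuousWithinAt)
      (fun r hr => (hψ r (interior_subset hr)).hasDerivWithinAt) fun r hr =>
        div_nonpos_of_nonpos_of_nonneg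
          (by linarith [hJ.one_le_deriv (mem_Ioi.1 (interior_subset hr)).le])
          (hJ.pos (interior_subset hr)).le
  obtain ⟨C, hC⟩ := hJ.eventually_neg_le_one_sub_deriv_div
  refine ⟨exp (sSup (ψ '' Ioi 0)), exp_pos _, ((continuous_exp.tendsto _).comp
    (hanti.tendsto_nhdsGT (bddAbove_image_Ioi_zero_of_antitoneOn hanti hψ hC))).congr' ?_⟩
  filter_upwards [self_mem_nhdsWithin] with r hr
  simp [ψ, exp_sub, exp_log (hJ.pos hr)]

end JacobiComparison

theorem stmt_12_general (a : ℝ) (ha : 0 < a) (k F F' F'' : ℝ → ℝ)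
    (hk_le : ∀ s ∈ Set.Ici (0 : ℝ), k s ≤ -a ^ 2)
    (hF' : ∀ s ∈ Set.Ici (0 : ℝ), HasDerivWithinAt F (F' s) (Set.Ici 0) s)
    (hF'' : ∀ s ∈ Set.Ici (0 : ℝ), HasDerivWithinAt F' (F'' s) (Set.Ici 0) s)
    (hODE : ∀ s ∈ Set.Ici (0 : ℝ), F'' s + k s * F s = 0)
    (hF0 : F 0 = 0) (hF'0 : F' 0 = 1)
    (g : ℝ → ℝ) (hg : ∀ r > (0 : ℝ), g r = Real.exp (-∫ t in Set.Ioi r, 1 / F t)) :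
    (∀ r > (0 : ℝ), HasDerivAt g (g r / F r) r ∧ 0 < g r / F r) ∧
      ∃ c : ℝ, 0 < c ∧ Tendsto (fun r => g r / r) (𝓝[>] 0) (𝓝 c) ∧
        Tendsto (fun r => g r / F r) (𝓝[>] 0) (𝓝 c) ∧
        ∃ gext : ℝ → ℝ, Set.EqOn gext g (Set.Ioi 0) ∧ gext 0 = 0 ∧
          ContDiffOn ℝ 1 gext (Set.Ici 0) ∧ derivWithin gext (Set.Ici 0) 0 = c := by
  have hJ : JacobiComparison a F F' F'' :=
    ⟨hF', hF'', fun s hs hFs => by nlinarith [hODE s hs, hk_le s hs], hF0, hF'0⟩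
  have hg' : ∀ r > 0, HasDerivAt g (g r / F r) r := fun r hr => by
    rw [hg r hr]
    exact (hJ.hasDerivAt_exp_neg_tail ha hr).congr_of_eventuallyEq
      (eventually_of_mem (Ioi_mem_nhds hr) hg)
  obtain ⟨c, hc, hlim_F⟩ := hJ.exists_tendsto_exp_neg_tail_div ha
  replace hlim_F : Tendsto (fun r => g r / F r) (𝓝[>] 0) (𝓝 c) :=
    hlim_F.congr' (eventually_nhdsWithin_of_forall fun r hr => by simp only [hg r hr])
  have hF_div : Tendsto (fun r => F r / r) (𝓝[>] 0) (𝓝 1) :=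
    (hasDerivWithinAt_Ici_zero_iff_tendsto_div hF0).1 (hF'0 ▸ hF' 0 self_mem_Ici)
  have hlim : Tendsto (fun r => g r / r) (𝓝[>] 0) (𝓝 c) := by
    refine (mul_one c ▸ hlim_F.mul hF_div).congr' (eventually_nhdsWithin_of_forall fun r hr => ?_)
    exact div_mul_div_cancel₀ (hJ.pos hr).ne'
  have hg'_cont : ContinuousOn (fun r => g r / F r) (Ioi 0) := fun r hr =>
    ((hg' r hr).continuousAt.div (hJ.hasDerivAt hr).continuousAt (hJ.pos hr).ne').continuousWithinAt
  exact ⟨fun r hr => ⟨hg' r hr, div_pos (hg r hr ▸ exp_pos _) (hJ.pos hr)⟩,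
    c, hc, hlim, hlim_F, exists_contDiffOn_one_Ici_extension hg' hg'_cont hlim_F hlim⟩

/-- Further properties of `g(r) = exp(-∫ᵣ^∞ dt/F(t))` from Lemma 5: `g` is
differentiable on `(0,∞)` with `g'(r) = g(r)/F(r) > 0`; moreover `g'(r)` converges,
as `r → 0⁺`, to the positive limit `c = lim_{r→0⁺} g(r)/r`, so that `g` extends to a
`C¹` function on `[0,∞)` with `g(0) = 0` and `g'(0) = c > 0`. -/
theorem stmt_12 (a : ℝ) (ha : 0 < a) (k F F' F'' : ℝ → ℝ)
    (hk_cont : ContinuousOn k (Set.Ici 0))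
    (hk_le : ∀ s ∈ Set.Ici (0 : ℝ), k s ≤ -a ^ 2)
    (hF' : ∀ s ∈ Set.Ici (0 : ℝ), HasDerivWithinAt F (F' s) (Set.Ici 0) s)
    (hF'' : ∀ s ∈ Set.Ici (0 : ℝ), HasDerivWithinAt F' (F'' s) (Set.Ici 0) s)
    (hF''_cont : ContinuousOn F'' (Set.Ici 0))
    (hODE : ∀ s ∈ Set.Ici (0 : ℝ), F'' s + k s * F s = 0)
    (hF0 : F 0 = 0) (hF'0 : F' 0 = 1)
    (g : ℝ → ℝ) (hg : ∀ r > (0 : ℝ), g r = Real.exp (-∫ t in Set.Ioi r, 1 / F t)) :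
    (∀ r > (0 : ℝ), HasDerivAt g (g r / F r) r ∧ 0 < g r / F r) ∧
      ∃ c : ℝ, 0 < c ∧ Tendsto (fun r => g r / r) (𝓝[>] 0) (𝓝 c) ∧
        Tendsto (fun r => g r / F r) (𝓝[>] 0) (𝓝 c) ∧
        ∃ gext : ℝ → ℝ, Set.EqOn gext g (Set.Ioi 0) ∧ gext 0 = 0 ∧
          ContDiffOn ℝ 1 gext (Set.Ici 0) ∧ derivWithin gext (Set.Ici 0) 0 = c :=
  stmt_12_general a ha k F F' F'' hk_le hF' hF'' hODE hF0 hF'0 g hg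
end
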